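/- Symmetry of bounded amortised bisimulations: if Γ ⊨^m (M ▹ P) ≲ (N ▹ Q), i.e. some amortised typed bisimulation all of whose credits are at most m relates the two configurations at Γ (at some credit n ≤ m), then Γ ⊨^m (N ▹ Q) ≲ (M ▹ P); concretely, if R is an amortised typed bisimulation with all credits at most m, then the relation R_sym = { (Γ, m−n, N▹Q, M▹P) : (Γ, n, M▹P, N▹Q) ∈ R } is also an amortised typed bisimulation with all credits at most m. -/
import Mathlib


/-! # πcr : a π-calculus with explicit resource management (costed semantics) -/

abbrev Chan := ℕ
abbrev Var := ℕ

inductive Ident : Type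
  | ch (c : Chan)
  | var (x : Var)
deriving DecidableEq

/-- Type attributes: unrestricted ω, affine 1, unique-after-i •ᵢ. -/
inductive Attr : Type
  | unr
  | aff
  | unq (i : ℕ)
deriving DecidableEq

/-- Types: channel types [T⃗]^a, recursive types μX.C (de Bruijn), type
variables, and the process type. -/
inductive Ty : Type
  | chan (args : List Ty) (a : Attr)
  | mu (body : Ty)
  | tvar (n : ℕ)
  | proc

mutual
  /-- Substitute `R` for the de Bruijn type variable `n`. -/
  def Ty.substT (n : ℕ) (R : Ty) : Ty → Ty
    | .chan ts a => .chan (Ty.substTList n R ts) a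
    | .mu T => .mu (Ty.substT (n + 1) R T)
    | .tvar m => if m = n then R else .tvar m
    | .proc => .proc
  def Ty.substTList (n : ℕ) (R : Ty) : List Ty → List Ty
    | [] => []
    | t :: ts => Ty.substT n R t :: Ty.substTList n R ts
end

/-- Equi-recursive type equivalence: least type-congruence satisfying eRec. -/
inductive TyEquiv : Ty → Ty → Prop
  | refl (T) : TyEquiv T T
  | symm : TyEquiv T T' → TyEquiv T' T
  | trans : TyEquiv T T' → TyEquiv T' T'' → TyEquiv T T''
  | unfold (T) : TyEquiv (.mu T) (Ty.substT 0 (.mu T) T)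
  | chanCong (ts₁ ts₂ : List Ty) (a : Attr) :
      TyEquiv T T' → TyEquiv (.chan (ts₁ ++ T :: ts₂) a) (.chan (ts₁ ++ T' :: ts₂) a)
  | muCong : TyEquiv T T' → TyEquiv (.mu T) (.mu T')

/-- Subtyping on attributes: •ᵢ <: •ᵢ₊₁, •ᵢ <: ω, ω <: 1. -/
inductive AttrSub : Attr → Attr → Prop
  | indx (i) : AttrSub (.unq i) (.unq (i + 1))
  | unqUnr (i) : AttrSub (.unq i) .unr
  | unrAff : AttrSub .unr .aff

/-- Subtyping on channel types (same object types). -/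
inductive TySub : Ty → Ty → Prop
  | chan (ts) : AttrSub a a' → TySub (.chan ts a) (.chan ts a')

/-- Type splitting T = T₁ ∘ T₂. -/
inductive TySplit : Ty → Ty → Ty → Prop
  | unr (ts) : TySplit (.chan ts .unr) (.chan ts .unr) (.chan ts .unr)
  | proc : TySplit .proc .proc .proc
  | unq (ts i) : TySplit (.chan ts (.unq i)) (.chan ts .aff) (.chan ts (.unq (i + 1)))

/-- Type environments: multisets of assumptions. -/
abbrev TyEnv := Multiset (Ident × Ty)

def TyEnv.domChans (Γ : TyEnv) : Set Chan := {c | ∃ T, (Ident.ch c, T) ∈ Γ}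

def TyEnv.IsPartialMap (Γ : TyEnv) : Prop := (Γ.map Prod.fst).Nodup

/-- The environment structural relation Γ ≺ Γ'. -/
inductive EnvStruct : TyEnv → TyEnv → Prop
  | refl (Γ) : EnvStruct Γ Γ
  | trans : EnvStruct Γ Γ' → EnvStruct Γ' Γ'' → EnvStruct Γ Γ''
  | con : TySplit T T₁ T₂ → EnvStruct (Γ + {(u, T)}) (Γ + {(u, T₁), (u, T₂)})
  | join : TySplit T T₁ T₂ → EnvStruct (Γ + {(u, T₁), (u, T₂)}) (Γ + {(u, T)})
  | weak (Γ u T) : EnvStruct (Γ + {(u, T)}) Γ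
  | tyEq : TyEquiv T₁ T₂ → EnvStruct (Γ + {(u, T₁)}) (Γ + {(u, T₂)})
  | sub : TySub T₁ T₂ → EnvStruct (Γ + {(u, T₁)}) (Γ + {(u, T₂)})
  | rev (Γ u ts₁ ts₂) :
      EnvStruct (Γ + {(u, Ty.chan ts₁ (.unq 0))}) (Γ + {(u, Ty.chan ts₂ (.unq 0))})

/-- Consistency of a type environment. -/
def TyEnv.Consistent (Γ : TyEnv) : Prop :=
  ∃ Γ' : TyEnv, TyEnv.IsPartialMap Γ' ∧ EnvStruct Γ' Γ

/-- πcr processes. -/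
inductive Proc : Type
  | output (u : Ident) (vs : List Ident) (P : Proc)
  | input (u : Ident) (xs : List Var) (P : Proc)
  | nil
  | ifeq (u v : Ident) (P Q : Proc)
  | recur (w : Var) (P : Proc)
  | pvar (w : Var)
  | par (P Q : Proc)
  | alloc (x : Var) (P : Proc)
  | free (u : Ident) (P : Proc)

def Ident.subst (σ : Var → Option Chan) : Ident → Ident
  | .ch c => .ch c
  | .var x => match σ x with | some d => .ch d | none => .var x

def Ident.rename (σ : Chan → Chan) : Ident → Ident
  | .ch c => .ch (σ c)
  | .var x => .var x

def Ident.vars : Ident → Set Var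
  | .ch _ => ∅
  | .var x => {x}

def Ident.chans : Ident → Set Chan
  | .ch c => {c}
  | .var _ => ∅

def removeVars (σ : Var → Option Chan) (xs : List Var) : Var → Option Chan :=
  fun x => if x ∈ xs then none else σ x

/-- Capture-avoiding substitution of channels for variables. -/
def Proc.subst : (Var → Option Chan) → Proc → Proc
  | σ, .output u vs P => .output (u.subst σ) (vs.map (Ident.subst σ)) (Proc.subst σ P)
  | σ, .input u xs P => .input (u.subst σ) xs (Proc.subst (removeVars σ xs) P)
  | _, .nil => .nil
  | σ, .ifeq u v P Q => .ifeq (u.subst σ) (v.subst σ) (Proc.subst σ P) (Proc.subst σ Q)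
  | σ, .recur w P => .recur w (Proc.subst (removeVars σ [w]) P)
  | _, .pvar w => .pvar w
  | σ, .par P Q => .par (Proc.subst σ P) (Proc.subst σ Q)
  | σ, .alloc x P => .alloc x (Proc.subst (removeVars σ [x]) P)
  | σ, .free u P => .free (u.subst σ) (Proc.subst σ P)

/-- The substitution {d⃗/x⃗}. -/
def substOf (xs : List Var) (ds : List Chan) : Var → Option Chan :=
  fun x => (xs.zip ds).lookup x

/-- Substitution of a process `R` for the process variable `w`. -/
def Proc.substProc (w : Var) (R : Proc) : Proc → Proc
  | .output u vs P => .output u vs (Proc.substProc w R P)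
  | .input u xs P => if w ∈ xs then .input u xs P else .input u xs (Proc.substProc w R P)
  | .nil => .nil
  | .ifeq u v P Q => .ifeq u v (Proc.substProc w R P) (Proc.substProc w R Q)
  | .recur w' P => if w' = w then .recur w' P else .recur w' (Proc.substProc w R P)
  | .pvar w' => if w' = w then R else .pvar w'
  | .par P Q => .par (Proc.substProc w R P) (Proc.substProc w R Q)
  | .alloc x P => if x = w then .alloc x P else .alloc x (Proc.substProc w R P)
  | .free u P => .free u (Proc.substProc w R P)

/-- Renaming of channel names in a process. -/
def Proc.rename (σ : Chan → Chan) : Proc → Proc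
  | .output u vs P => .output (u.rename σ) (vs.map (Ident.rename σ)) (Proc.rename σ P)
  | .input u xs P => .input (u.rename σ) xs (Proc.rename σ P)
  | .nil => .nil
  | .ifeq u v P Q => .ifeq (u.rename σ) (v.rename σ) (Proc.rename σ P) (Proc.rename σ Q)
  | .recur w P => .recur w (Proc.rename σ P)
  | .pvar w => .pvar w
  | .par P Q => .par (Proc.rename σ P) (Proc.rename σ Q)
  | .alloc x P => .alloc x (Proc.rename σ P)
  | .free u P => .free (u.rename σ) (Proc.rename σ P)

def listVars (l : List Ident) : Set Var := {x | ∃ u ∈ l, x ∈ Ident.vars u}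

def listChans (l : List Ident) : Set Chan := {c | ∃ u ∈ l, c ∈ Ident.chans u}

/-- Free variables of a process. -/
def Proc.freeVars : Proc → Set Var
  | .output u vs P => u.vars ∪ listVars vs ∪ P.freeVars
  | .input u xs P => u.vars ∪ (P.freeVars \ {x | x ∈ xs})
  | .nil => ∅
  | .ifeq u v P Q => u.vars ∪ v.vars ∪ P.freeVars ∪ Q.freeVars
  | .recur w P => P.freeVars \ {w}
  | .pvar w => {w}
  | .par P Q => P.freeVars ∪ Q.freeVars
  | .alloc x P => P.freeVars \ {x}
  | .free u P => u.vars ∪ P.freeVars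

/-- Channel names occurring in a process. -/
def Proc.chans : Proc → Set Chan
  | .output u vs P => u.chans ∪ listChans vs ∪ P.chans
  | .input u _ P => u.chans ∪ P.chans
  | .nil => ∅
  | .ifeq u v P Q => u.chans ∪ v.chans ∪ P.chans ∪ Q.chans
  | .recur _ P => P.chans
  | .pvar _ => ∅
  | .par P Q => P.chans ∪ Q.chans
  | .alloc _ P => P.chans
  | .free u P => u.chans ∪ P.chans

def Proc.Closed (P : Proc) : Prop := P.freeVars = ∅

/-- Structural equivalence: least congruence for parallel composition with
commutativity, associativity and nil. -/
inductive StructEq : Proc → Proc → Prop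
  | refl (P) : StructEq P P
  | symm : StructEq P Q → StructEq Q P
  | trans : StructEq P Q → StructEq Q R → StructEq P R
  | comm (P Q) : StructEq (.par P Q) (.par Q P)
  | assoc (P Q R) : StructEq (.par P (.par Q R)) (.par (.par P Q) R)
  | nil (P) : StructEq (.par P .nil) P
  | parCong : StructEq P P' → StructEq Q Q' → StructEq (.par P Q) (.par P' Q')

/-- A system: a resource environment (finite set of allocated channels)
together with a process. -/
structure System : Type where
  res : Finset Chan
  proc : Proc

def System.rename (S : System) (σ : Chan → Chan) : System :=
  ⟨S.res.image σ, S.proc.rename σ⟩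

def TyEnv.rename (Γ : TyEnv) (σ : Chan → Chan) : TyEnv :=
  Γ.map (fun p => (Ident.rename σ p.1, p.2))

/-- Environments consisting only of unrestricted assumptions. -/
def TyEnv.Unrestricted (Γ : TyEnv) : Prop :=
  ∀ p ∈ Γ, (∃ ts, p.2 = Ty.chan ts .unr) ∨ p.2 = Ty.proc

/-- The assumptions left from `u : [ts]^a` after one use: the `a − 1`
operation.  Undefined (none) for unique-now. -/
def predEnv (u : Ident) (ts : List Ty) : Attr → Option TyEnv
  | .aff => some 0
  | .unr => some {(u, Ty.chan ts .unr)}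
  | .unq 0 => none
  | .unq (i + 1) => some {(u, Ty.chan ts (.unq i))}

/-- The substructural typing judgement Γ ⊢ P. -/
inductive HasTy : TyEnv → Proc → Prop
  | out {Γ Δ : TyEnv} {u : Ident} {ts : List Ty} {a : Attr} {vs : List Ident} {P : Proc} :
      predEnv u ts a = some Δ → vs.length = ts.length →
      HasTy (Γ + Δ) P →
      HasTy (Γ + {(u, Ty.chan ts a)} + Multiset.ofList (vs.zip ts)) (.output u vs P)
  | inp {Γ Δ : TyEnv} {u : Ident} {ts : List Ty} {a : Attr} {xs : List Var} {P : Proc} :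
      predEnv u ts a = some Δ → xs.length = ts.length →
      HasTy (Γ + Δ + Multiset.ofList ((xs.map Ident.var).zip ts)) P →
      HasTy (Γ + {(u, Ty.chan ts a)}) (.input u xs P)
  | par : HasTy Γ₁ P → HasTy Γ₂ Q → HasTy (Γ₁ + Γ₂) (.par P Q)
  | ifeq : (∃ T, (u, T) ∈ Γ) → (∃ T, (v, T) ∈ Γ) →
      HasTy Γ P → HasTy Γ Q → HasTy Γ (.ifeq u v P Q)
  | recur : TyEnv.Unrestricted Γ → HasTy (Γ + {(Ident.var w, Ty.proc)}) P →
      HasTy Γ (.recur w P)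
  | pvar (w) : HasTy {(Ident.var w, Ty.proc)} (.pvar w)
  | free : HasTy Γ P → HasTy (Γ + {(u, Ty.chan ts (.unq 0))}) (.free u P)
  | alloc : HasTy (Γ + {(Ident.var x, Ty.chan ts (.unq 0))}) P → HasTy Γ (.alloc x P)
  | nil : HasTy 0 .nil
  | str : HasTy Γ' P → EnvStruct Γ Γ' → HasTy Γ P

/-- Configurations Γ ◃ M ▹ P. -/
def IsConfig (Γ : TyEnv) (S : System) : Prop :=
  S.proc.Closed ∧ TyEnv.domChans Γ ⊆ ↑S.res ∧
  ∃ Δ : TyEnv, TyEnv.Consistent (Γ + Δ) ∧ HasTy Δ S.proc ∧ TyEnv.domChans Δ ⊆ ↑S.res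

/-- The costed reduction relation M ▹ P →ₖ N ▹ Q. -/
inductive Red : System → ℤ → System → Prop
  | com {M : Finset Chan} {c : Chan} {ds : List Chan} {xs : List Var} {P Q : Proc} :
      c ∈ M → xs.length = ds.length →
      Red ⟨M, .par (.output (.ch c) (ds.map Ident.ch) P) (.input (.ch c) xs Q)⟩ 0
          ⟨M, .par P (Q.subst (substOf xs ds))⟩
  | ifThen {M : Finset Chan} {c : Chan} {P Q : Proc} :
      c ∈ M → Red ⟨M, .ifeq (.ch c) (.ch c) P Q⟩ 0 ⟨M, P⟩
  | ifElse {M : Finset Chan} {c d : Chan} {P Q : Proc} :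
      c ∈ M → d ∈ M → c ≠ d → Red ⟨M, .ifeq (.ch c) (.ch d) P Q⟩ 0 ⟨M, Q⟩
  | unfold {M : Finset Chan} {w : Var} {P : Proc} :
      Red ⟨M, .recur w P⟩ 0 ⟨M, P.substProc w (.recur w P)⟩
  | alloc {M : Finset Chan} {c : Chan} {x : Var} {P : Proc} :
      c ∉ M → Red ⟨M, .alloc x P⟩ 1 ⟨insert c M, P.subst (substOf [x] [c])⟩
  | free {M : Finset Chan} {c : Chan} {P : Proc} :
      c ∈ M → Red ⟨M, .free (.ch c) P⟩ (-1) ⟨M.erase c, P⟩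
  | str {M M' : Finset Chan} {P P' Q Q' : Proc} {k : ℤ} :
      StructEq P P' → Red ⟨M, P'⟩ k ⟨M', Q'⟩ → StructEq Q' Q → Red ⟨M, P⟩ k ⟨M', Q⟩
  | parL {M M' : Finset Chan} {P P' Q : Proc} {k : ℤ} :
      Red ⟨M, P⟩ k ⟨M', P'⟩ → Red ⟨M, .par P Q⟩ k ⟨M', .par P' Q⟩
  | parR {M M' : Finset Chan} {P Q Q' : Proc} {k : ℤ} :
      Red ⟨M, Q⟩ k ⟨M', Q'⟩ → Red ⟨M, .par P Q⟩ k ⟨M', .par P Q'⟩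

/-- Reflexive-transitive closure of reduction, accumulating costs. -/
inductive RedStar : System → ℤ → System → Prop
  | refl (S) : RedStar S 0 S
  | step {S S' S'' : System} {k l : ℤ} :
      RedStar S k S' → Red S' l S'' → RedStar S (k + l) S''

/-- Actions of the (pre-)LTS. -/
inductive Act : Type
  | out (c : Chan) (ds : List Chan)
  | inp (c : Chan) (ds : List Chan)
  | tau
  | alloc
  | free (c : Chan)
  | env

/-- The pre-LTS over triples Γ ◃ M ▹ P. -/
inductive PreStep : TyEnv → System → Act → ℤ → TyEnv → System → Prop
  | lOut {Γ Δ : TyEnv} {c : Chan} {ts : List Ty} {a : Attr} {ds : List Chan}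
      {P : Proc} {M : Finset Chan} :
      predEnv (.ch c) ts a = some Δ → ds.length = ts.length →
      PreStep (Γ + {(Ident.ch c, Ty.chan ts a)})
        ⟨M, .output (.ch c) (ds.map Ident.ch) P⟩ (.out c ds) 0
        (Γ + Δ + Multiset.ofList ((ds.map Ident.ch).zip ts)) ⟨M, P⟩
  | lIn {Γ Δ : TyEnv} {c : Chan} {ts : List Ty} {a : Attr} {ds : List Chan}
      {xs : List Var} {P : Proc} {M : Finset Chan} :
      predEnv (.ch c) ts a = some Δ → ds.length = ts.length → xs.length = ds.length →
      PreStep (Γ + {(Ident.ch c, Ty.chan ts a)} + Multiset.ofList ((ds.map Ident.ch).zip ts))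
        ⟨M, .input (.ch c) xs P⟩ (.inp c ds) 0
        (Γ + Δ) ⟨M, P.subst (substOf xs ds)⟩
  | lComL {Γ₁ Γ₁' Γ₂ Γ₂' Γ : TyEnv} {M : Finset Chan} {c : Chan} {ds : List Chan}
      {P P' Q Q' : Proc} :
      PreStep Γ₁ ⟨M, P⟩ (.out c ds) 0 Γ₁' ⟨M, P'⟩ →
      PreStep Γ₂ ⟨M, Q⟩ (.inp c ds) 0 Γ₂' ⟨M, Q'⟩ →
      PreStep Γ ⟨M, .par P Q⟩ .tau 0 Γ ⟨M, .par P' Q'⟩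
  | lComR {Γ₁ Γ₁' Γ₂ Γ₂' Γ : TyEnv} {M : Finset Chan} {c : Chan} {ds : List Chan}
      {P P' Q Q' : Proc} :
      PreStep Γ₁ ⟨M, Q⟩ (.out c ds) 0 Γ₁' ⟨M, Q'⟩ →
      PreStep Γ₂ ⟨M, P⟩ (.inp c ds) 0 Γ₂' ⟨M, P'⟩ →
      PreStep Γ ⟨M, .par P Q⟩ .tau 0 Γ ⟨M, .par P' Q'⟩
  | lParL {Γ Γ' : TyEnv} {M M' : Finset Chan} {P P' Q : Proc} {μ : Act} {k : ℤ} :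
      PreStep Γ ⟨M, P⟩ μ k Γ' ⟨M', P'⟩ →
      PreStep Γ ⟨M, .par P Q⟩ μ k Γ' ⟨M', .par P' Q⟩
  | lParR {Γ Γ' : TyEnv} {M M' : Finset Chan} {P Q Q' : Proc} {μ : Act} {k : ℤ} :
      PreStep Γ ⟨M, Q⟩ μ k Γ' ⟨M', Q'⟩ →
      PreStep Γ ⟨M, .par P Q⟩ μ k Γ' ⟨M', .par P Q'⟩
  | lStr {Γ Γ' : TyEnv} {M : Finset Chan} {P : Proc} :
      EnvStruct Γ Γ' → PreStep Γ ⟨M, P⟩ .env 0 Γ' ⟨M, P⟩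
  | lRec {Γ : TyEnv} {M : Finset Chan} {w : Var} {P : Proc} :
      PreStep Γ ⟨M, .recur w P⟩ .tau 0 Γ ⟨M, P.substProc w (.recur w P)⟩
  | lThen {Γ : TyEnv} {M : Finset Chan} {c : Chan} {P Q : Proc} :
      c ∈ M → PreStep Γ ⟨M, .ifeq (.ch c) (.ch c) P Q⟩ .tau 0 Γ ⟨M, P⟩
  | lElse {Γ : TyEnv} {M : Finset Chan} {c d : Chan} {P Q : Proc} :
      c ∈ M → d ∈ M → c ≠ d →
      PreStep Γ ⟨M, .ifeq (.ch c) (.ch d) P Q⟩ .tau 0 Γ ⟨M, Q⟩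
  | lAll {Γ : TyEnv} {M : Finset Chan} {c : Chan} {x : Var} {P : Proc} :
      c ∉ M →
      PreStep Γ ⟨M, .alloc x P⟩ .tau 1 Γ ⟨insert c M, P.subst (substOf [x] [c])⟩
  | lAllE {Γ : TyEnv} {M : Finset Chan} {c : Chan} {ts : List Ty} {P : Proc} :
      c ∉ M →
      PreStep Γ ⟨M, P⟩ .alloc 1 (Γ + {(Ident.ch c, Ty.chan ts (.unq 0))}) ⟨insert c M, P⟩
  | lFree {Γ : TyEnv} {M : Finset Chan} {c : Chan} {P : Proc} :
      c ∉ M → PreStep Γ ⟨insert c M, .free (.ch c) P⟩ .tau (-1) Γ ⟨M, P⟩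
  | lFreeE {Γ : TyEnv} {M : Finset Chan} {c : Chan} {ts : List Ty} {P : Proc} :
      c ∉ M →
      PreStep (Γ + {(Ident.ch c, Ty.chan ts (.unq 0))}) ⟨insert c M, P⟩ (.free c) (-1) Γ ⟨M, P⟩

/-- The costed LTS: the pre-LTS closed under renamings that are invisible to
the observer (rule lRen). -/
def Step (Γ : TyEnv) (S : System) (μ : Act) (k : ℤ) (Γ' : TyEnv) (S' : System) : Prop :=
  ∃ σ : Equiv.Perm Chan, (∀ c ∈ TyEnv.domChans Γ, σ c = c) ∧
    PreStep Γ (S.rename ⇑σ) μ k Γ' S'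

/-- Weak (cost-accumulating) transitions. -/
inductive Weak : TyEnv → System → Act → ℤ → TyEnv → System → Prop
  | single {Γ Γ' : TyEnv} {S S' : System} {μ : Act} {k : ℤ} :
      Step Γ S μ k Γ' S' → Weak Γ S μ k Γ' S'
  | tauLeft {Γ Γ₁ Γ' : TyEnv} {S S₁ S' : System} {μ : Act} {l k : ℤ} :
      Step Γ S .tau l Γ₁ S₁ → Weak Γ₁ S₁ μ k Γ' S' → Weak Γ S μ (l + k) Γ' S'
  | tauRight {Γ Γ₁ Γ' : TyEnv} {S S₁ S' : System} {μ : Act} {l k : ℤ} :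
      Weak Γ S μ l Γ₁ S₁ → Step Γ₁ S₁ .tau k Γ' S' → Weak Γ S μ (l + k) Γ' S'

/-- Weak μ̂ transition: for μ = τ the matching move may be empty. -/
def WeakHat (Γ : TyEnv) (S : System) (μ : Act) (k : ℤ) (Γ' : TyEnv) (S' : System) : Prop :=
  Weak Γ S μ k Γ' S' ∨ (μ = .tau ∧ k = 0 ∧ Γ' = Γ ∧ S' = S)

/-- Amortised type-indexed relations on systems. -/
abbrev ARel := TyEnv → ℕ → System → System → Prop

/-- Both related triples must be configurations. -/
def IsAmortisedRel (R : ARel) : Prop :=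
  ∀ Γ n S T, R Γ n S T → IsConfig Γ S ∧ IsConfig Γ T

/-- Amortised typed bisimulation. -/
def IsAmortisedBisim (R : ARel) : Prop :=
  IsAmortisedRel R ∧
  ∀ Γ n S T, R Γ n S T →
    (∀ μ k Γ' S', Step Γ S μ k Γ' S' →
      ∃ (T' : System) (l : ℤ) (m : ℕ), WeakHat Γ T μ l Γ' T' ∧ (m : ℤ) = (n : ℤ) + l - k ∧ R Γ' m S' T') ∧
    (∀ μ l Γ' T', Step Γ T μ l Γ' T' →
      ∃ (S' : System) (k : ℤ) (m : ℕ), WeakHat Γ S μ k Γ' S' ∧ (m : ℤ) = (n : ℤ) + l - k ∧ R Γ' m S' T')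

/-- Amortised bisimilarity at Γ with credit n : Γ ⊨ S ≲ⁿ T. -/
def Bisim (Γ : TyEnv) (n : ℕ) (S T : System) : Prop :=
  ∃ R : ARel, IsAmortisedBisim R ∧ R Γ n S T

/-- Γ ⊨ S ≲ T : bisimilarity at some credit. -/
def BisimAny (Γ : TyEnv) (S T : System) : Prop := ∃ n, Bisim Γ n S T

/-- Bounded by m : every credit occurring in the relation is at most m. -/
def BoundedBy (R : ARel) (m : ℕ) : Prop := ∀ Γ n S T, R Γ n S T → n ≤ m

/-- Γ ⊨^m S ≲ T : related by some m-bounded amortised typed bisimulation. -/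
def BoundedBisim (m : ℕ) (Γ : TyEnv) (S T : System) : Prop :=
  ∃ (R : ARel) (n : ℕ), IsAmortisedBisim R ∧ BoundedBy R m ∧ n ≤ m ∧ R Γ n S T

/-- Barbs: (Γ ◃ M ▹ P) ⇓ c. -/
def Barb (Γ : TyEnv) (S : System) (c : Chan) : Prop :=
  (∃ (k : ℤ) (M' : Finset Chan) (R P' : Proc) (ds : List Ident) (P'' : Proc),
      RedStar S k ⟨M', R⟩ ∧ StructEq R (.par P' (.output (.ch c) ds P''))) ∧
  c ∈ TyEnv.domChans Γ

def BarbPreserving (R : ARel) : Prop :=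
  ∀ Γ n S T, R Γ n S T → ∀ c, (Barb Γ S c ↔ Barb Γ T c)

def CostImproving (R : ARel) : Prop :=
  ∀ Γ n S T, R Γ n S T →
    (∀ (k : ℤ) (S' : System), Red S k S' →
      ∃ (l : ℤ) (T' : System) (m : ℕ),
        RedStar T l T' ∧ (m : ℤ) = (n : ℤ) + l - k ∧ R Γ m S' T') ∧
    (∀ (l : ℤ) (T' : System), Red T l T' →
      ∃ (k : ℤ) (S' : System) (m : ℕ),
        RedStar S k S' ∧ (m : ℤ) = (n : ℤ) + l - k ∧ R Γ m S' T')

def FullyContextual (R : ARel) : Prop :=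
  ∀ Γ n S T, R Γ n S T →
    (∀ (c : Chan) (ts : List Ty), c ∉ S.res → c ∉ T.res →
      R (Γ + {(Ident.ch c, Ty.chan ts (.unq 0))}) n
        ⟨insert c S.res, S.proc⟩ ⟨insert c T.res, T.proc⟩) ∧
    (∀ (Γ₁ Γ₂ : TyEnv) (R₀ : Proc), EnvStruct Γ (Γ₁ + Γ₂) → HasTy Γ₂ R₀ →
      R Γ₁ n ⟨S.res, .par S.proc R₀⟩ ⟨T.res, .par T.proc R₀⟩ ∧
      R Γ₁ n ⟨S.res, .par R₀ S.proc⟩ ⟨T.res, .par R₀ T.proc⟩)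

def IsContextualFamily (R : ARel) : Prop :=
  IsAmortisedRel R ∧ BarbPreserving R ∧ CostImproving R ∧ FullyContextual R

/-- The behavioural contextual preorder Γ ⊨ S ⊑ⁿ T. -/
def CtxPre (Γ : TyEnv) (n : ℕ) (S T : System) : Prop :=
  ∃ R : ARel, IsContextualFamily R ∧ R Γ n S T

def CtxPreAny (Γ : TyEnv) (S T : System) : Prop := ∃ n, CtxPre Γ n S T
lemma sym_aux (R : ARel) (m : ℕ) (hB : IsAmortisedBisim R) (hbd : BoundedBy R m) :
    IsAmortisedBisim (fun Γ p T S => ∃ n, R Γ n S T ∧ p = m - n) ∧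
    BoundedBy (fun Γ p T S => ∃ n, R Γ n S T ∧ p = m - n) m := by
  obtain ⟨hRel, hClauses⟩ := hB
  refine ⟨⟨?_, ?_⟩, ?_⟩
  · rintro Γ p T S ⟨n, hR, rfl⟩
    exact ⟨(hRel _ _ _ _ hR).2, (hRel _ _ _ _ hR).1⟩
  · rintro Γ p T S ⟨n, hR, rfl⟩
    have hn : n ≤ m := hbd _ _ _ _ hR
    obtain ⟨h1, h2⟩ := hClauses _ _ _ _ hR
    constructor
    · rintro μ k Γ' T' hstep
      obtain ⟨S', l, m', hw, hm', hR'⟩ := h2 μ k Γ' T' hstep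
      have hm'le : m' ≤ m := hbd _ _ _ _ hR'
      exact ⟨S', l, m - m', hw, by omega, ⟨m', hR', rfl⟩⟩
    · rintro μ l Γ' S' hstep
      obtain ⟨T', k, m', hw, hm', hR'⟩ := h1 μ l Γ' S' hstep
      have hm'le : m' ≤ m := hbd _ _ _ _ hR'
      exact ⟨T', k, m - m', hw, by omega, ⟨m', hR', rfl⟩⟩
  · rintro Γ p T S ⟨n, hR, rfl⟩
    omega

/-- Symmetry of bounded amortised bisimulations. -/
theorem bounded_bisim_symmetry :
    (∀ (m : ℕ) (Γ : TyEnv) (S T : System),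
      BoundedBisim m Γ S T → BoundedBisim m Γ T S) ∧
    (∀ (R : ARel) (m : ℕ), IsAmortisedBisim R → BoundedBy R m →
      IsAmortisedBisim (fun Γ p T S => ∃ n, R Γ n S T ∧ p = m - n) ∧
      BoundedBy (fun Γ p T S => ∃ n, R Γ n S T ∧ p = m - n) m) := by
  refine ⟨?_, fun R m hB hbd => sym_aux R m hB hbd⟩
  rintro m Γ S T ⟨R, n, hB, hbd, hn, hR⟩
  obtain ⟨hB', hbd'⟩ := sym_aux R m hB hbd
  exact ⟨_, m - n, hB', hbd', Nat.sub_le _ _, ⟨n, hR, rfl⟩⟩
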